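/- Condition X₁ holds (that is, A_j = 0 and B_j = 0 for all j ∈ {2, 0, -2}) if and only if |α_{j k}| = 1/√3 for all j, k ∈ {2, 0, -2} and |β_R| = |β_L| = 1/√2. -/

import Mathlib

/-!
The squared moduli `|α_{jk}|²` of a unitary matrix form a doubly stochastic matrix. Summing
`A_j = 0` over `j` and using that the first two rows sum to `1` gives `|β_R|² = |β_L|²`, hence
both equal `1/2`. Then `A_j = B_j = 0` says that the `j`-th column of squared moduli is constant,
and as it sums to `1` every entry is `1/3`.
-/

open Matrix

namespace Matrix

variable {𝕜 n : Type*} [RCLike 𝕜] [Fintype n] [DecidableEq n] {U : Matrix n n 𝕜}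

theorem sum_norm_sq_row_of_mem_unitaryGroup (hU : U ∈ unitaryGroup n 𝕜) (i : n) :
    ∑ k, ‖U i k‖ ^ 2 = 1 := by
  have hii := congrFun₂ (mem_unitaryGroup_iff.1 hU) i i
  simp only [mul_apply, star_apply, ← starRingEnd_apply, RCLike.mul_conj, one_apply_eq] at hii
  exact_mod_cast hii

theorem map_norm_sq_mem_doublyStochastic (hU : U ∈ unitaryGroup n 𝕜) :
    U.map (‖·‖ ^ 2) ∈ doublyStochastic ℝ n := by
  refine mem_doublyStochastic_iff_sum.2 ⟨fun _ _ => sq_nonneg _,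
    sum_norm_sq_row_of_mem_unitaryGroup hU, fun j => ?_⟩
  simpa using sum_norm_sq_row_of_mem_unitaryGroup (transpose_mem_unitaryGroup_iff.2 hU) j

end Matrix

theorem eq_one_div_sqrt_iff {x c : ℝ} (hx : 0 ≤ x) (hc : 0 ≤ c) :
    x = 1 / √c ↔ x ^ 2 = 1 / c := by
  rw [one_div, ← Real.sqrt_inv, eq_comm, Real.sqrt_eq_iff_eq_sq (inv_nonneg.2 hc) hx, eq_comm,
    one_div]

theorem conditionX1_iff_of_mem_doublyStochastic {M : Matrix (Fin 3) (Fin 3) ℝ}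
    (hM : M ∈ doublyStochastic ℝ (Fin 3)) {r l : ℝ} (hrl : r + l = 1) :
    (∀ j, M 0 j * r - M 1 j * l = 0 ∧ M 1 j * r - M 2 j * l = 0) ↔
      (∀ i j, M i j = 1 / 3) ∧ r = 1 / 2 ∧ l = 1 / 2 := by
  constructor
  · intro h
    have hr_eq_l : r = l := by
      have hsum := Finset.sum_eq_zero (s := Finset.univ) fun j _ => (h j).1
      rw [Finset.sum_sub_distrib, ← Finset.sum_mul, ← Finset.sum_mul,
        sum_row_of_mem_doublyStochastic hM, sum_row_of_mem_doublyStochastic hM] at hsum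
      linarith
    have hr : r = 1 / 2 := by linarith
    refine ⟨fun i j => ?_, hr, by linarith⟩
    obtain ⟨h01, h12⟩ := h j
    rw [← hr_eq_l, hr] at h01 h12
    have hcol := sum_col_of_mem_doublyStochastic hM j
    rw [Fin.sum_univ_three] at hcol
    fin_cases i <;> simp only [Fin.zero_eta, Fin.mk_one, Fin.reduceFinMk] <;> linarith
  · rintro ⟨hM3, rfl, rfl⟩ j
    simp only [hM3]
    norm_num

/-- With `H̃₂ = α` a `3 × 3` unitary matrix (rows/columns indexed by
`{2, 0, -2}` in this order, so index `0 ↦ 2`, `1 ↦ 0`, `2 ↦ -2`) and `|β_R|² + |β_L|² = 1`,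
condition `X₁` (i.e. `A_j = B_j = 0` for all `j`) holds iff all entries of `H̃₂` have
modulus `1/√3` and `|β_R| = |β_L| = 1/√2`. -/
theorem conditionX1_iff (α : Matrix (Fin 3) (Fin 3) ℂ)
    (hα : α ∈ Matrix.unitaryGroup (Fin 3) ℂ)
    (βR βL : ℂ) (hβ : ‖βR‖ ^ 2 + ‖βL‖ ^ 2 = 1) :
    (∀ j : Fin 3,
        ‖α 0 j‖ ^ 2 * ‖βR‖ ^ 2
          - ‖α 1 j‖ ^ 2 * ‖βL‖ ^ 2 = 0 ∧
        ‖α 1 j‖ ^ 2 * ‖βR‖ ^ 2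
          - ‖α 2 j‖ ^ 2 * ‖βL‖ ^ 2 = 0) ↔
    ((∀ j k : Fin 3, ‖α j k‖ = 1 / Real.sqrt 3) ∧
      ‖βR‖ = 1 / Real.sqrt 2 ∧ ‖βL‖ = 1 / Real.sqrt 2) := by
  simp only [eq_one_div_sqrt_iff (norm_nonneg _) zero_le_three,
    eq_one_div_sqrt_iff (norm_nonneg _) zero_le_two]
  exact conditionX1_iff_of_mem_doublyStochastic (map_norm_sq_mem_doublyStochastic hα) hβ
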